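/- arXiv:1508.02902 — 4 statements merged into one kernel-verified Lean document; each statement's English description precedes it below -/
import Mathlib

section
/- Let (X, d_X, μ_X) be a complete separable metric space which is geometrically doubling (there is λ ∈ ℕ such that every ball B(x, r) can be covered by at most λ balls of radius r/2), equipped with a Borel regular measure μ_X that is finite on every ball, and let (Y, d_Y, μ_Y) be a separable metric space equipped with a measure μ_Y. If f : X → Y is a μ_X-measurable mapping and A ⊆ X is a Borel set, then there exists a mapping g : X → Y with g = f μ_X-almost everywhere on X such that the Banach indicatrix y ↦ N(y, g, A) is a μ_Y-measurable function (measurable with respect to the completion of μ_Y). -/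
open MeasureTheory

/-- A metric space is geometrically doubling if there is `n : ℕ` such that every ball
`B(x, r)` can be covered by at most `n` balls of radius `r / 2`. -/
def GeometricallyDoubling (X : Type*) [PseudoMetricSpace X] : Prop :=
  ∃ n : ℕ, ∀ (x : X) (r : ℝ), ∃ s : Finset X,
    s.card ≤ n ∧ Metric.ball x r ⊆ ⋃ c ∈ s, Metric.ball c (r / 2)

/-- A mapping `f : X → Y` is `μ`-measurable if the preimage of every open set is
measurable for the completion of `μ` (i.e. null measurable). -/
def MuMeasurableMap {X Y : Type*} [MeasurableSpace X] [TopologicalSpace Y]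
    (μ : Measure X) (f : X → Y) : Prop :=
  ∀ E : Set Y, IsOpen E → NullMeasurableSet (f ⁻¹' E) μ

/-- The Banach indicatrix (multiplicity function): the extended-natural-number
cardinality of `{x ∈ A | f x = y}`. -/
noncomputable def banachIndicatrix {X Y : Type*} (f : X → Y) (A : Set X) (y : Y) : ℕ∞ :=
  (A ∩ f ⁻¹' {y}).encard

/-!
A μ-measurable map agrees a.e. with a Borel map `f'`, and `f'` is continuous for a finer Polish
topology on `X` with the same Borel sets. For that topology the σ-finite measure is inner regular,
so `A` contains a σ-compact set `U` of full measure. Closures of basic open sets separate finite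
sets of points, so `n ≤ N(y, f', U)` iff `y` lies in the images of `U ∩ P` for `n` pairwise
disjoint such closures `P`; these images are σ-compact, which makes `N(·, f', U)` Borel.
Redefining the map on `A \ U` as a constant `y₀` changes the indicatrix only at `y₀`.
-/

open MeasureTheory Set TopologicalSpace
open scoped ENNReal

theorem ENat.measurable_of_measurableSet_natCast_le {α : Type*} [MeasurableSpace α]
    {F : α → ℕ∞} (hF : ∀ n : ℕ, MeasurableSet {a | (n : ℕ∞) ≤ F a}) : Measurable F := by
  refine ENat.measurable_iff.2 fun n => ?_
  have hlevel : F ⁻¹' {(n : ℕ∞)} = {a | (n : ℕ∞) ≤ F a} \ {a | ((n + 1 : ℕ) : ℕ∞) ≤ F a} := by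
    ext a
    simp only [mem_preimage, mem_singleton_iff, mem_sdiff, mem_ofPred_eq, Nat.cast_add,
      Nat.cast_one, ENat.add_one_le_iff (ENat.natCast_ne_top n), not_lt]
    exact ⟨fun h => ⟨h.ge, h.le⟩, fun h => le_antisymm h.2 h.1⟩
  rw [hlevel]
  exact (hF n).diff (hF (n + 1))

theorem natCast_le_encard_iff_exists_pairwiseDisjoint {X ι : Type*} {P : ι → Set X}
    (hP : ∀ t : Finset X, ∃ c : X → ι,
      (∀ x ∈ t, x ∈ P (c x)) ∧ (t : Set X).PairwiseDisjoint (P ∘ c))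
    (S : Set X) (n : ℕ) :
    (n : ℕ∞) ≤ S.encard ↔ ∃ s : Finset ι,
      s.card = n ∧ (s : Set ι).PairwiseDisjoint P ∧ ∀ i ∈ s, (P i ∩ S).Nonempty := by
  classical
  constructor
  · intro hn
    obtain ⟨t, htS, htn⟩ := exists_subset_encard_eq hn
    have htfin : t.Finite := finite_of_encard_eq_coe htn
    obtain ⟨c, hcP, hcdisj⟩ := hP htfin.toFinset
    rw [Finite.coe_toFinset] at hcdisj
    simp only [Finite.mem_toFinset] at hcP
    have hinj : InjOn c t := fun x hx y hy hxy => by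
      by_contra hne
      exact disjoint_left.1 (hcdisj hx hy hne) (hcP x hx) (hxy ▸ hcP x hx : x ∈ P (c y))
    refine ⟨htfin.toFinset.image c, ?_, ?_, ?_⟩
    · rw [Finset.card_image_of_injOn (by simpa using hinj)]
      exact_mod_cast (htfin.encard_eq_coe_toFinset_card.symm.trans htn)
    · rwa [Finset.coe_image, Finite.coe_toFinset, hinj.pairwiseDisjoint_image]
    · simp only [Finset.mem_image, Finite.mem_toFinset, forall_exists_index, and_imp]
      rintro _ x hx rfl
      exact ⟨x, hcP x hx, htS hx⟩
  · rintro ⟨s, rfl, hdisj, hS⟩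
    choose x hx using fun i : (s : Set ι) => hS i i.2
    have hinj : Function.Injective x := fun i j hij => Subtype.ext <| by
      by_contra hne
      exact disjoint_left.1 (hdisj i.2 j.2 hne) (hx i).1 (hij ▸ (hx j).1)
    calc (s.card : ℕ∞) = ENat.card (s : Set ι) := (encard_coe_eq_coe_finsetCard s).symm
      _ ≤ (range x).encard := hinj.encard_range
      _ ≤ S.encard := encard_le_encard (range_subset_iff.2 fun i => (hx i).2)

theorem exists_closure_countableBasis_pairwiseDisjoint {X : Type*} [TopologicalSpace X]
    [T2Space X] [RegularSpace X] [SecondCountableTopology X] (t : Finset X) :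
    ∃ c : X → countableBasis X, (∀ x ∈ t, x ∈ closure (c x : Set X)) ∧
      (t : Set X).PairwiseDisjoint fun x => closure (c x : Set X) := by
  obtain ⟨U, hU, hdisj⟩ := t.finite_toSet.t2_separation
  have hB : ∀ x, ∃ B ∈ countableBasis X, x ∈ B ∧ closure B ⊆ U x := fun x =>
    (isBasis_countableBasis X).exists_closure_subset ((hU x).2.mem_nhds (hU x).1)
  choose B hBmem hxB hBU using hB
  exact ⟨fun x => ⟨B x, hBmem x⟩, fun x _ => subset_closure (hxB x), hdisj.mono hBU⟩

theorem IsSigmaCompact.measurable_banachIndicatrix {X Y : Type*} [TopologicalSpace X]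
    [T2Space X] [RegularSpace X] [SecondCountableTopology X] [TopologicalSpace Y] [T2Space Y]
    [MeasurableSpace Y] [OpensMeasurableSpace Y] {f : X → Y} (hf : Continuous f) {U : Set X}
    (hU : IsSigmaCompact U) : Measurable (banachIndicatrix f U) := by
  set P : countableBasis X → Set X := fun B => closure B
  have hPU : ∀ B, MeasurableSet (f '' (P B ∩ U)) := by
    obtain ⟨K, hK, rfl⟩ := hU
    intro B
    rw [inter_iUnion, image_iUnion]
    exact .iUnion fun j => ((hK j).inter_left isClosed_closure).image hf |>.isClosed.measurableSet
  have hsep := natCast_le_encard_iff_exists_pairwiseDisjoint (P := P)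
    (exists_closure_countableBasis_pairwiseDisjoint (X := X))
  refine ENat.measurable_of_measurableSet_natCast_le fun n => ?_
  have hlevel : {y | (n : ℕ∞) ≤ banachIndicatrix f U y} =
      ⋃ (s : Finset (countableBasis X)) (_ : s.card = n ∧ (s : Set _).PairwiseDisjoint P),
        ⋂ B ∈ s, f '' (P B ∩ U) := by
    ext y
    simp only [banachIndicatrix, mem_ofPred_eq, hsep, mem_iUnion, mem_iInter, exists_prop,
      and_assoc]
    have hfiber : ∀ B, (P B ∩ (U ∩ f ⁻¹' {y})).Nonempty ↔ y ∈ f '' (P B ∩ U) := fun B =>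
      ⟨fun ⟨x, hxP, hxU, hfx⟩ => ⟨x, ⟨hxP, hxU⟩, hfx⟩,
        fun ⟨x, ⟨hxP, hxU⟩, hfx⟩ => ⟨x, hxP, hxU, hfx⟩⟩
    simp only [hfiber]
  rw [hlevel]
  have : Countable (countableBasis X) := (countable_countableBasis X).to_subtype
  exact .iUnion fun s => .iUnion fun _ => .biInter s.countable_toSet fun B _ => hPU B

theorem MeasurableSet.exists_isSigmaCompact_subset_measure_sdiff_eq_zero {X : Type*}
    [TopologicalSpace X] [T2Space X] [MeasurableSpace X] [OpensMeasurableSpace X]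
    {μ : Measure X} [μ.InnerRegularCompactLTTop] [SigmaFinite μ] {A : Set X}
    (hA : MeasurableSet A) : ∃ U ⊆ A, IsSigmaCompact U ∧ μ (A \ U) = 0 := by
  set An : ℕ → Set X := fun n => A ∩ spanningSets μ n
  have hK : ∀ n m : ℕ, ∃ K ⊆ An n, IsCompact K ∧ μ (An n \ K) < (m : ℝ≥0∞)⁻¹ := fun n m =>
    (hA.inter (measurableSet_spanningSets μ n)).exists_isCompact_sdiff_lt
      (measure_inter_lt_top_of_right_ne_top (measure_spanningSets_lt_top μ n).ne).ne
      (ENNReal.inv_ne_zero.2 (ENNReal.natCast_ne_top m))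
  choose K hKA hKc hKμ using hK
  refine ⟨⋃ n, ⋃ m, K n m, iUnion₂_subset fun n m => (hKA n m).trans inter_subset_left,
    isSigmaCompact_iUnion _ fun n => isSigmaCompact_iUnion _ fun m => (hKc n m).isSigmaCompact,
    ?_⟩
  have hcover : A \ ⋃ n, ⋃ m, K n m ⊆ ⋃ n, An n \ ⋃ m, K n m := by
    rintro x ⟨hxA, hxK⟩
    exact mem_iUnion.2 ⟨spanningSetsIndex μ x, ⟨hxA, mem_spanningSetsIndex μ x⟩,
      fun hx => hxK (mem_iUnion.2 ⟨_, hx⟩)⟩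
  refine measure_mono_null hcover (measure_iUnion_null fun n => ?_)
  refine le_zero_iff.1 (ge_of_tendsto' ENNReal.tendsto_inv_nat_nhds_zero fun m => ?_)
  exact (measure_mono (sdiff_subset_sdiff_right (subset_iUnion (K n) m))).trans (hKμ n m).le

theorem Measurable.exists_subset_measure_sdiff_eq_zero_measurable_banachIndicatrix
    {X Y : Type*} [TopologicalSpace X] [PolishSpace X] [MeasurableSpace X] [BorelSpace X]
    [TopologicalSpace Y] [T2Space Y] [SecondCountableTopology Y] [MeasurableSpace Y]
    [OpensMeasurableSpace Y] {μ : Measure X} [SigmaFinite μ] {f : X → Y} (hf : Measurable f)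
    {A : Set X} (hA : MeasurableSet A) :
    ∃ U ⊆ A, μ (A \ U) = 0 ∧ Measurable (banachIndicatrix f U) := by
  obtain ⟨t', ht', hft', hpolish'⟩ := hf.exists_continuous
  let _ := t'
  have : BorelSpace X :=
    ⟨BorelSpace.measurable_eq.trans (borel_eq_borel_of_le hpolish' ‹_› ht').symm⟩
  obtain ⟨U, hUA, hU, hnull⟩ := hA.exists_isSigmaCompact_subset_measure_sdiff_eq_zero (μ := μ)
  exact ⟨U, hUA, hnull, hU.measurable_banachIndicatrix hft'⟩

theorem banachIndicatrix_piecewise_const_of_ne {X Y : Type*} (f : X → Y) (A s : Set X)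
    [DecidablePred (· ∈ s)] {c y : Y} (hy : y ≠ c) :
    banachIndicatrix (s.piecewise (fun _ => c) f) A y = banachIndicatrix f (A \ s) y := by
  unfold banachIndicatrix
  congr 1
  ext x
  by_cases hx : x ∈ s <;> simp [hx, hy.symm]

theorem Measurable.banachIndicatrix_piecewise_const {X Y : Type*} [MeasurableSpace Y]
    [MeasurableSingletonClass Y] {f : X → Y} {A s : Set X} [DecidablePred (· ∈ s)] (c : Y)
    (hf : Measurable (banachIndicatrix f (A \ s))) :
    Measurable (banachIndicatrix (s.piecewise (fun _ => c) f) A) := by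
  classical
  have hmodify : banachIndicatrix (s.piecewise (fun _ => c) f) A =
      ({c} : Set Y).piecewise (fun _ => banachIndicatrix (s.piecewise (fun _ => c) f) A c)
        (banachIndicatrix f (A \ s)) := by
    funext y
    by_cases hy : y = c
    · simp [hy]
    · simp [hy, banachIndicatrix_piecewise_const_of_ne f A s hy]
  rw [hmodify]
  exact Measurable.piecewise (measurableSet_singleton c) measurable_const hf

theorem sigmaFinite_of_measure_ball_lt_top {X : Type*} [PseudoMetricSpace X] [MeasurableSpace X]
    {μ : Measure X} (hμ : ∀ (x : X) (r : ℝ), μ (Metric.ball x r) < ⊤) : SigmaFinite μ := by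
  rcases isEmpty_or_nonempty X with hX | ⟨⟨x⟩⟩
  · exact Measure.sigmaFinite_of_countable countable_empty (by simp) (by simp [eq_empty_of_isEmpty])
  · exact Measure.sigmaFinite_of_countable (countable_range fun n : ℕ => Metric.ball x n)
      (forall_mem_range.2 fun n => hμ x n) (by rw [sUnion_range, Metric.iUnion_ball_nat])

theorem MuMeasurableMap.aemeasurable {X Y : Type*} [MeasurableSpace X] [TopologicalSpace Y]
    [SecondCountableTopology Y] [MeasurableSpace Y] [BorelSpace Y] {μ : Measure X} {f : X → Y}
    (hf : MuMeasurableMap μ f) : AEMeasurable f μ :=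
  NullMeasurable.aemeasurable (measurable_of_isOpen hf)

theorem banachIndicatrix_nullMeasurable_of_ae_redefinition_general
    {X Y : Type*}
    [MetricSpace X] [CompleteSpace X] [TopologicalSpace.SeparableSpace X]
    [MeasurableSpace X] [BorelSpace X]
    [MetricSpace Y] [TopologicalSpace.SeparableSpace Y]
    [MeasurableSpace Y] [BorelSpace Y]
    (μX : Measure X) (μY : Measure Y)
    (hballs : ∀ (x : X) (r : ℝ), μX (Metric.ball x r) < ⊤)
    (f : X → Y) (hf : MuMeasurableMap μX f)
    (A : Set X) (hA : MeasurableSet A) :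
    ∃ g : X → Y, g =ᵐ[μX] f ∧
      NullMeasurable (fun y => banachIndicatrix g A y) μY := by
  have := sigmaFinite_of_measure_ball_lt_top hballs
  have hf' := hf.aemeasurable
  obtain ⟨U, hUA, hnull, hU⟩ :=
    hf'.measurable_mk.exists_subset_measure_sdiff_eq_zero_measurable_banachIndicatrix (μ := μX) hA
  rcases isEmpty_or_nonempty Y with hY | ⟨⟨y₀⟩⟩
  · exact ⟨f, .rfl, (measurable_of_countable _).nullMeasurable⟩
  classical
  have hg : (A \ U).piecewise (fun _ => y₀) (hf'.mk f) =ᵐ[μX] hf'.mk f :=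
    ae_iff.2 <| measure_mono_null
      (fun x hx => by_contra fun hxU => hx (piecewise_eq_of_notMem _ _ _ hxU)) hnull
  refine ⟨_, hg.trans hf'.ae_eq_mk.symm, ?_⟩
  rw [← sdiff_sdiff_cancel_left hUA] at hU
  exact (hU.banachIndicatrix_piecewise_const y₀).nullMeasurable

/-- For a μX-measurable map `f` from a complete separable geometrically
doubling metric space `X` (with a Borel regular measure finite on balls) to a separable
metric measure space `Y`, and a Borel set `A ⊆ X`, the map `f` can be redefined on a
μX-null set so that the Banach indicatrix `y ↦ N(y, g, A)` is measurable with respect to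
the completion of `μY`. -/
theorem banachIndicatrix_nullMeasurable_of_ae_redefinition
    {X Y : Type*}
    [MetricSpace X] [CompleteSpace X] [TopologicalSpace.SeparableSpace X]
    [MeasurableSpace X] [BorelSpace X]
    [MetricSpace Y] [TopologicalSpace.SeparableSpace Y]
    [MeasurableSpace Y] [BorelSpace Y]
    (μX : Measure X) (μY : Measure Y)
    (hdoub : GeometricallyDoubling X)
    (hballs : ∀ (x : X) (r : ℝ), μX (Metric.ball x r) < ⊤)
    (f : X → Y) (hf : MuMeasurableMap μX f)
    (A : Set X) (hA : MeasurableSet A) :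
    ∃ g : X → Y, g =ᵐ[μX] f ∧
      NullMeasurable (fun y => banachIndicatrix g A y) μY :=
  banachIndicatrix_nullMeasurable_of_ae_redefinition_general μX μY hballs f hf A hA
end

section
/- Let (X, d_X, μ_X) be a complete separable metric space which is geometrically doubling (there is λ ∈ ℕ such that every ball B(x, r) can be covered by at most λ balls of radius r/2), equipped with a Borel regular measure μ_X finite on every ball, and let (Y, d_Y, μ_Y) be a separable metric space with a measure μ_Y. Let A ⊆ X be a Borel set and let f : X → Y be a μ_X-measurable mapping with the property that f(B) is a μ_Y-measurable set for every Borel set B ⊆ A. Then the Banach indicatrix y ↦ N(y, f, A) is a μ_Y-measurable function. -/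
open MeasureTheory

section Aux

variable {X : Type*} [MetricSpace X]

/-- The `n`-th cell of the partition of `X` into pieces of balls of radius `r`
centered at the points of the sequence `u`. -/
def mcell (u : ℕ → X) (r : ℝ) (n : ℕ) : Set X :=
  Metric.ball (u n) r \ ⋃ m < n, Metric.ball (u m) r

lemma mcell_measurable [MeasurableSpace X] [BorelSpace X] (u : ℕ → X) (r : ℝ) (n : ℕ) :
    MeasurableSet (mcell u r n) :=
  measurableSet_ball.diff
    (MeasurableSet.biUnion (Set.to_countable _) fun _ _ => measurableSet_ball)

lemma mcell_subset (u : ℕ → X) (r : ℝ) (n : ℕ) : mcell u r n ⊆ Metric.ball (u n) r :=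
  Set.diff_subset

lemma mcell_disjoint {u : ℕ → X} {r : ℝ} {m n : ℕ} (h : m ≠ n) :
    Disjoint (mcell u r m) (mcell u r n) := by
  wlog hmn : m < n generalizing m n
  · exact (this h.symm ((h.lt_or_gt).resolve_left hmn)).symm
  rw [Set.disjoint_left]
  rintro x ⟨hx1, -⟩ ⟨-, hx2⟩
  exact hx2 (Set.mem_biUnion hmn hx1)

lemma exists_mem_mcell {u : ℕ → X} (hu : DenseRange u) {r : ℝ} (hr : 0 < r) (x : X) :
    ∃ n, x ∈ mcell u r n := by
  classical
  have hne : ∃ n, x ∈ Metric.ball (u n) r := by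
    obtain ⟨n, hn⟩ := hu.exists_dist_lt x hr
    exact ⟨n, by simpa [Metric.mem_ball, dist_comm] using hn⟩
  refine ⟨Nat.find hne, Nat.find_spec hne, ?_⟩
  intro hx
  obtain ⟨m, hm⟩ := Set.mem_iUnion.1 hx
  obtain ⟨hmlt, hmem⟩ := Set.mem_iUnion.1 hm
  exact absurd hmem (Nat.find_min hne hmlt)

/-- Key combinatorial characterization: the fiber over `y` inside `A` has at least `m`
points iff for some scale `k` there are `m` distinct cells whose intersection with `A`
is mapped onto `y`. -/
lemma encard_ge_iff {Y : Type*} {u : ℕ → X} (hu : DenseRange u)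
    (A : Set X) (f : X → Y) (y : Y) (m : ℕ) :
    (m : ℕ∞) ≤ (A ∩ f ⁻¹' {y}).encard ↔
      ∃ k : ℕ, ∃ S : Finset ℕ, S.card = m ∧
        ∀ n ∈ S, y ∈ f '' (A ∩ mcell u ((1/2 : ℝ)^k) n) := by
  classical
  haveI : Nonempty X := ⟨u 0⟩
  constructor
  · intro hm
    obtain ⟨T, hTsub, hTcard⟩ := Set.exists_subset_encard_eq hm
    have hTfin : T.Finite := Set.finite_of_encard_eq_coe hTcard
    -- find a positive lower bound on distances between distinct points of T
    obtain ⟨δ, hδpos, hδ⟩ :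
        ∃ δ : ℝ, 0 < δ ∧ ∀ x ∈ T, ∀ x' ∈ T, x ≠ x' → δ ≤ dist x x' := by
      set F := hTfin.toFinset with hF
      by_cases hP : (F.offDiag).Nonempty
      · obtain ⟨p, hpP, hpmin⟩ := Finset.exists_min_image F.offDiag
          (fun p => dist p.1 p.2) hP
        have hpne : p.1 ≠ p.2 := (Finset.mem_offDiag.1 hpP).2.2
        refine ⟨dist p.1 p.2, dist_pos.2 hpne, ?_⟩
        intro x hx x' hx' hne
        exact hpmin (x, x') (Finset.mem_offDiag.2
          ⟨hTfin.mem_toFinset.2 hx, hTfin.mem_toFinset.2 hx', hne⟩)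
      · refine ⟨1, one_pos, ?_⟩
        intro x hx x' hx' hne
        exact absurd ⟨(x, x'), Finset.mem_offDiag.2
          ⟨hTfin.mem_toFinset.2 hx, hTfin.mem_toFinset.2 hx', hne⟩⟩ hP
    obtain ⟨k, hk⟩ : ∃ k : ℕ, ((1/2 : ℝ))^k < δ / 2 :=
      exists_pow_lt_of_lt_one (by linarith) (by norm_num)
    have hr : (0:ℝ) < (1/2 : ℝ)^k := by positivity
    choose g hg using fun x => exists_mem_mcell hu hr x
    have hinj : Set.InjOn g T := by
      intro x hx x' hx' hgx
      by_contra hne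
      have h1 : x ∈ Metric.ball (u (g x)) ((1/2 : ℝ)^k) := mcell_subset _ _ _ (hg x)
      have h2 : x' ∈ Metric.ball (u (g x)) ((1/2 : ℝ)^k) := by
        rw [hgx]; exact mcell_subset _ _ _ (hg x')
      have : dist x x' < 2 * (1/2 : ℝ)^k := by
        have := dist_triangle x (u (g x)) x'
        rw [Metric.mem_ball] at h1 h2
        rw [dist_comm] at h2
        linarith
      have := hδ x hx x' hx' hne
      linarith
    refine ⟨k, hTfin.toFinset.image g, ?_, ?_⟩
    · rw [Finset.card_image_of_injOn (by simpa [hTfin.mem_toFinset] using hinj)]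
      have := hTfin.encard_eq_coe_toFinset_card
      rw [this] at hTcard
      exact_mod_cast hTcard
    · intro n hn
      obtain ⟨x, hxF, hgx⟩ := Finset.mem_image.1 hn
      have hxT : x ∈ T := hTfin.mem_toFinset.1 hxF
      have hx' := hTsub hxT
      exact ⟨x, ⟨hx'.1, hgx ▸ hg x⟩, hx'.2⟩
  · rintro ⟨k, S, hScard, hS⟩
    choose! g hg1 hg2 using fun n hn => (hS n hn : ∃ x, x ∈ A ∩ mcell u ((1/2:ℝ)^k) n ∧ f x = y)
    have hinj : Set.InjOn g (↑S : Set ℕ) := by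
      intro n hn n' hn' hgg
      by_contra hne
      have h1 := (hg1 n hn).2
      have h2 := (hg1 n' hn').2
      rw [hgg] at h1
      exact (mcell_disjoint hne).ne_of_mem h1 h2 rfl
    have hsub : g '' (↑S : Set ℕ) ⊆ A ∩ f ⁻¹' {y} := by
      rintro _ ⟨n, hn, rfl⟩
      exact ⟨(hg1 n hn).1, hg2 n hn⟩
    calc (m : ℕ∞) = (S.card : ℕ∞) := by rw [hScard]
      _ = (↑S : Set ℕ).encard := (Set.encard_coe_eq_coe_finsetCard S).symm
      _ = (g '' (↑S : Set ℕ)).encard := (hinj.encard_image).symm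
      _ ≤ (A ∩ f ⁻¹' {y}).encard := Set.encard_mono hsub

end Aux

/-- If the μX-measurable map `f` sends Borel subsets of the Borel set
`A` to μY-measurable sets, then the Banach indicatrix `y ↦ N(y, f, A)` is measurable
with respect to the completion of `μY`. -/
theorem banachIndicatrix_nullMeasurable_of_image_nullMeasurable
    {X Y : Type*}
    [MetricSpace X] [CompleteSpace X] [TopologicalSpace.SeparableSpace X]
    [MeasurableSpace X] [BorelSpace X]
    [MetricSpace Y] [TopologicalSpace.SeparableSpace Y]
    [MeasurableSpace Y] [BorelSpace Y]
    (μX : Measure X) (μY : Measure Y)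
    (hdoub : GeometricallyDoubling X)
    (hballs : ∀ (x : X) (r : ℝ), μX (Metric.ball x r) < ⊤)
    (A : Set X) (hA : MeasurableSet A)
    (f : X → Y) (hf : MuMeasurableMap μX f)
    (himg : ∀ B : Set X, B ⊆ A → MeasurableSet B → NullMeasurableSet (f '' B) μY) :
    NullMeasurable (fun y => banachIndicatrix f A y) μY := by
  by_cases hX : Nonempty X
  swap
  · have hempty : ∀ y, banachIndicatrix f A y = 0 := by
      intro y
      have hA0 : A ∩ f ⁻¹' {y} = ∅ := by
        haveI : IsEmpty X := not_nonempty_iff.1 hX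
        exact Set.eq_empty_of_isEmpty _
      simp [banachIndicatrix, hA0]
    have : (fun y => banachIndicatrix f A y) = fun _ => (0 : ℕ∞) := funext hempty
    rw [this]
    exact measurable_const.nullMeasurable
  · haveI := hX
    set u : ℕ → X := TopologicalSpace.denseSeq X with hu_def
    have hu : DenseRange u := TopologicalSpace.denseRange_denseSeq X
    -- the superlevel sets of the indicatrix
    set G : ℕ → Set Y := fun m => {y | (m : ℕ∞) ≤ banachIndicatrix f A y} with hG_def
    have hGeq : ∀ m : ℕ, G m = ⋃ (k : ℕ), ⋃ (S : Finset ℕ), ⋃ (_ : S.card = m),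
        ⋂ n ∈ S, f '' (A ∩ mcell u ((1/2 : ℝ)^k) n) := by
      intro m
      ext y
      simp only [hG_def, Set.mem_setOf_eq, Set.mem_iUnion, Set.mem_iInter,
        banachIndicatrix]
      rw [encard_ge_iff hu A f y m]
      tauto
    have hGmeas : ∀ m : ℕ, NullMeasurableSet (G m) μY := by
      intro m
      rw [hGeq m]
      refine NullMeasurableSet.iUnion fun k => NullMeasurableSet.iUnion fun S =>
        NullMeasurableSet.iUnion fun _ => ?_
      refine NullMeasurableSet.biInter (Set.to_countable _) fun n _ => ?_
      exact himg _ Set.inter_subset_left (hA.inter (mcell_measurable u _ n))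
    have hsingle : ∀ c : ℕ∞,
        NullMeasurableSet ((fun y => banachIndicatrix f A y) ⁻¹' {c}) μY := by
      intro c
      cases c with
      | top =>
        have : (fun y => banachIndicatrix f A y) ⁻¹' {⊤} = ⋂ m : ℕ, G m := by
          ext y
          simp only [Set.mem_preimage, Set.mem_singleton_iff, Set.mem_iInter,
            hG_def, Set.mem_setOf_eq]
          constructor
          · intro h m; simp [h]
          · intro h
            by_contra hne
            obtain ⟨j, hj⟩ := WithTop.ne_top_iff_exists.1 hne
            have := h (j + 1)
            rw [← hj] at this
            exact absurd (Nat.cast_le.1 this) (by omega)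
        rw [this]
        exact NullMeasurableSet.iInter fun m => hGmeas m
      | coe n =>
        have : (fun y => banachIndicatrix f A y) ⁻¹' {(n : ℕ∞)} = G n \ G (n + 1) := by
          ext y
          simp only [Set.mem_preimage, Set.mem_singleton_iff, Set.mem_diff,
            hG_def, Set.mem_setOf_eq]
          constructor
          · intro h
            refine ⟨le_of_eq h.symm, ?_⟩
            rw [h]
            intro hle
            exact absurd (Nat.cast_le.1 hle) (by omega)
          · rintro ⟨h1, h2⟩
            rcases eq_or_ne (banachIndicatrix f A y) ⊤ with htop | hne
            · exact absurd (htop ▸ le_top) h2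
            · obtain ⟨j, hj⟩ := WithTop.ne_top_iff_exists.1 hne
              rw [← hj] at h1 h2 ⊢
              have hn1 : n ≤ j := Nat.cast_le.1 h1
              have hn2 : ¬ (n + 1 ≤ j) := fun h => h2 (Nat.cast_le.2 h)
              exact Nat.cast_inj.mpr (by omega : j = n)
        rw [this]
        exact (hGmeas n).diff (hGmeas (n + 1))
    intro s _
    have : (fun y => banachIndicatrix f A y) ⁻¹' s =
        ⋃ c ∈ s, (fun y => banachIndicatrix f A y) ⁻¹' {c} := by
      ext y; simp
    rw [this]
    exact NullMeasurableSet.biUnion (Set.to_countable s) fun c _ => hsingle c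
end

section
/- There exists a Lebesgue-measurable function f : ℝ → ℝ such that the Banach indicatrix y ↦ N(y, f, ℝ) is not measurable with respect to the completion of Lebesgue measure on ℝ (in particular, it is not almost everywhere equal to any Borel-measurable function). Such an f can be obtained by choosing a bijection from the Cantor set C onto a Vitali non-measurable set V ⊆ ℝ and extending it by 0 off C; then N(y, f, ℝ) coincides with the characteristic function of V on ℝ \ {0}. -/
/-!
Let `V ⊆ ℝ` be a Vitali set and `φ : V → ℝ` an injection into the Cantor set, which is null
and has the cardinality of the continuum. Extending `Subtype.val` along `φ` by `0` gives
`f : ℝ → ℝ` vanishing off the null set `range φ`, hence Lebesgue measurable. Away from `0`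
the fibres of `f` are the images under `φ` of those of `Subtype.val`, so the Banach indicatrix
of `f` agrees almost everywhere with the indicator of `V`, which is not null measurable.

A Vitali set is not null measurable by Steinhaus' theorem: if it had positive measure, its
difference set would contain a nonzero rational; if it were null, countably many of its
translates would cover `ℝ`.
-/

open MeasureTheory

open Set Filter Topology Pointwise Function

theorem AddSubgroup.not_nullMeasurableSet_range_out {G : Type*} [AddCommGroup G]
    [TopologicalSpace G] [IsTopologicalAddGroup G] [LocallyCompactSpace G] [T1Space G]
    [(𝓝[≠] (0 : G)).NeBot] [MeasurableSpace G] [BorelSpace G] (μ : Measure G)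
    [μ.IsAddHaarMeasure] [μ.InnerRegular] {H : AddSubgroup G} (hc : (H : Set G).Countable)
    (hd : Dense (H : Set G)) :
    ¬ NullMeasurableSet (range (Quotient.out : G ⧸ H → G)) μ := by
  intro hV
  set V := range (Quotient.out : G ⧸ H → G)
  have hcover : ⋃ h ∈ (H : Set G), (fun x ↦ -h + x) ⁻¹' V = univ := by
    refine eq_univ_of_forall fun x ↦ mem_iUnion₂.2 ⟨-Quotient.out (x : G ⧸ H) + x, ?_, ?_⟩
    · exact QuotientAddGroup.eq.1 (QuotientAddGroup.out_eq' _)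
    · exact ⟨(x : G ⧸ H), by simp⟩
  rcases eq_or_ne (μ V) 0 with hV0 | hV0
  · have : μ univ = 0 := by
      rw [← hcover, measure_biUnion_null_iff hc]
      exact fun h _ ↦ (measure_preimage_add μ (-h) V).trans hV0
    exact NeZero.ne μ (Measure.measure_univ_eq_zero.1 this)
  obtain ⟨t, htV, ht, htae⟩ := hV.exists_measurable_subset_ae_eq
  have hsub : t - t ∈ 𝓝 (0 : G) := μ.sub_mem_nhds_zero_of_addHaar_pos t ht
    ((measure_congr htae).trans_ne hV0).bot_lt
  obtain ⟨h, ⟨hH, hh0⟩, a, ha, b, hb, rfl⟩ :=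
    (hd.sdiff_singleton 0).inter_nhds_nonempty hsub
  obtain ⟨p, rfl⟩ := htV ha
  obtain ⟨q, rfl⟩ := htV hb
  have hpq : p = q := by
    rw [← QuotientAddGroup.out_eq' p, ← QuotientAddGroup.out_eq' q, QuotientAddGroup.eq]
    simpa [neg_add_eq_sub] using H.neg_mem hH
  simp [hpq] at hh0

theorem exists_not_nullMeasurableSet_real : ∃ V : Set ℝ, ¬ NullMeasurableSet V volume := by
  set H := (Rat.castHom ℝ).toAddMonoidHom.range
  refine ⟨_, AddSubgroup.not_nullMeasurableSet_range_out (H := H) volume ?_ ?_⟩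
  · rw [AddMonoidHom.coe_range]
    exact countable_range _
  · rw [AddMonoidHom.coe_range]
    exact Rat.denseRange_cast

theorem volume_preCantorSet_le (n : ℕ) :
    volume (preCantorSet n) ≤ ENNReal.ofReal ((2 / 3) ^ n) := by
  induction n with
  | zero => simp
  | succ n ih =>
    have h₀ : (fun x : ℝ ↦ x / 3) = AffineMap.homothety 0 (1 / 3 : ℝ) := by
      ext x
      simp only [AffineMap.homothety_apply, vsub_eq_sub, vadd_eq_add, smul_eq_mul]
      ring
    have h₁ : (fun x : ℝ ↦ (2 + x) / 3) = AffineMap.homothety 1 (1 / 3 : ℝ) := by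
      ext x
      simp only [AffineMap.homothety_apply, vsub_eq_sub, vadd_eq_add, smul_eq_mul]
      ring
    calc volume (preCantorSet (n + 1))
        ≤ volume ((· / 3) '' preCantorSet n)
            + volume ((fun x ↦ (2 + x) / 3) '' preCantorSet n) := measure_union_le _ _
      _ = ENNReal.ofReal (2 / 3) * volume (preCantorSet n) := by
          rw [h₀, h₁, Measure.addHaar_image_homothety, Measure.addHaar_image_homothety,
            ← two_mul, ← mul_assoc, ← ENNReal.ofReal_ofNat 2,
            ← ENNReal.ofReal_mul (by norm_num)]
          norm_num
      _ ≤ ENNReal.ofReal (2 / 3) * ENNReal.ofReal ((2 / 3) ^ n) := by gcongr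
      _ = ENNReal.ofReal ((2 / 3) ^ (n + 1)) := by
          rw [← ENNReal.ofReal_mul (by norm_num), pow_succ']

theorem volume_cantorSet : volume cantorSet = 0 := by
  have hlim : Tendsto (fun n : ℕ ↦ ENNReal.ofReal ((2 / 3) ^ n)) atTop (𝓝 0) := by
    simpa using ENNReal.tendsto_ofReal
      (tendsto_pow_atTop_nhds_zero_of_lt_one (by norm_num : (0 : ℝ) ≤ 2 / 3) (by norm_num))
  exact le_antisymm (ge_of_tendsto' hlim fun n ↦
    (measure_mono (iInter_subset _ n)).trans (volume_preCantorSet_le n)) zero_le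

theorem Cardinal.mk_cantorSet : Cardinal.mk cantorSet = Cardinal.continuum := by
  simp [Cardinal.mk_congr cantorSetEquivNatToBool]

theorem banachIndicatrix_extend_zero {α X Y : Type*} [Zero X] {φ : α → Y} (hφ : Injective φ)
    (g : α → X) {y : X} (hy : y ≠ 0) :
    banachIndicatrix (extend φ g 0) univ y = banachIndicatrix g univ y := by
  have hfib : extend φ g 0 ⁻¹' {y} = φ '' (g ⁻¹' {y}) := by
    ext x
    by_cases hx : ∃ a, φ a = x
    · obtain ⟨a, rfl⟩ := hx
      simp [hφ.extend_apply, hφ.eq_iff]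
    · simp only [mem_preimage, extend_apply' _ _ _ hx, Pi.zero_apply, mem_singleton_iff,
        hy.symm, false_iff]
      rintro ⟨a, -, rfl⟩
      exact hx ⟨a, rfl⟩
  rw [banachIndicatrix, banachIndicatrix, univ_inter, univ_inter, hfib, hφ.encard_image]

theorem banachIndicatrix_subtype_val {X : Type*} (V : Set X) (y : X) :
    banachIndicatrix (Subtype.val : V → X) univ y = V.indicator 1 y := by
  rw [banachIndicatrix, univ_inter, ← Subtype.val_injective.encard_image,
    Subtype.image_preimage_coe]
  by_cases hy : y ∈ V <;> simp [hy]

/-- There is a Lebesgue-measurable function `f : ℝ → ℝ` whose Banach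
indicatrix `y ↦ N(y, f, ℝ)` is not measurable with respect to the completion of Lebesgue
measure; in particular it is not almost everywhere equal to any Borel-measurable
function. -/
theorem exists_measurable_fun_banachIndicatrix_not_nullMeasurable :
    ∃ f : ℝ → ℝ,
      (∀ E : Set ℝ, IsOpen E → NullMeasurableSet (f ⁻¹' E) volume) ∧
      ¬ NullMeasurable (fun y => banachIndicatrix f Set.univ y) volume ∧
      ∀ g : ℝ → ℕ∞, Measurable g →
        ¬ (fun y => banachIndicatrix f Set.univ y) =ᵐ[volume] g := by
  obtain ⟨V, hV⟩ := exists_not_nullMeasurableSet_real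
  obtain ⟨e⟩ : Nonempty (ℝ ≃ cantorSet) :=
    Cardinal.eq.1 (Cardinal.mk_real.trans Cardinal.mk_cantorSet.symm)
  set φ : V → ℝ := fun v ↦ e v
  have hφ : Injective φ := Subtype.val_injective.comp (e.injective.comp Subtype.val_injective)
  set f := extend φ Subtype.val 0
  have hf : f =ᵐ[volume] 0 := by
    have hnull : volume (range φ) = 0 :=
      measure_mono_null (range_subset_iff.2 fun v ↦ (e v).2) volume_cantorSet
    filter_upwards [compl_mem_ae_iff.2 hnull] with x hx using extend_apply' _ _ _ hx
  have hN : (fun y ↦ banachIndicatrix f univ y) =ᵐ[volume] V.indicator 1 := by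
    filter_upwards [compl_mem_ae_iff.2 (measure_singleton 0)] with y hy
    rw [banachIndicatrix_extend_zero hφ _ hy, banachIndicatrix_subtype_val]
  have hNm : ¬ NullMeasurable (fun y ↦ banachIndicatrix f univ y) volume := fun hm ↦
    hV ((aemeasurable_indicator_const_iff (1 : ℕ∞)).1 (hm.congr hN).aemeasurable)
  refine ⟨f, fun E hE ↦ measurable_const.nullMeasurable.congr hf.symm hE.measurableSet, hNm,
    fun g hg hae ↦ hNm (hg.nullMeasurable.congr hae.symm)⟩
end

section
/- Let (X, d_X) be a metric space, Y a set, f : X → Y a mapping, and A ⊆ X. For each k ∈ ℕ let (Q^k_α)_{α ∈ I_k} be a countable partition of X into pairwise disjoint sets, each of diameter at most ε_k, where ε_k → 0 as k → ∞. Define N_k(y) = Σ_{α ∈ I_k} χ_{f(Q^k_α ∩ A)}(y), the number of partition pieces Q^k_α on which f attains the value y at least once within A. Then for every y ∈ Y, N(y, f, A) = sup_{k ∈ ℕ} N_k(y) in the extended natural numbers. -/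
open MeasureTheory

/-!
Let `S = A ∩ f⁻¹{y}`, so that `N_k(y)` counts the pieces of the `k`-th partition meeting `S`.
Disjointness of the pieces gives `N_k(y) ≤ #S` for every `k`. Conversely, a finite `t ⊆ S` has
a positive minimal separation, so once `ε_k` is below it every piece meets `t` in at most one
point, whence `#t ≤ N_k(y)`; letting `t` exhaust `S` gives `#S ≤ sup_k N_k(y)`.
-/

open Set Filter Topology
open scoped ENNReal

namespace ENat

variable {ι : Type*}

theorem summable (f : ι → ℕ∞) : Summable f :=
  (hasSum_of_isLUB _ isLUB_iSup).summable

theorem toENNReal_tsum (f : ι → ℕ∞) : ((∑' i, f i : ℕ∞) : ℝ≥0∞) = ∑' i, (f i : ℝ≥0∞) :=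
  ((summable f).hasSum.map toENNRealRingHom continuous_toENNReal).tsum_eq.symm

theorem tsum_set_one (s : Set ι) : ∑' _ : s, (1 : ℕ∞) = s.encard := by
  rw [← toENNReal_inj, toENNReal_tsum]
  simp

theorem tsum_indicator_one {Y : Type*} (T : ι → Set Y) (y : Y) :
    ∑' i, (T i).indicator (fun _ => (1 : ℕ∞)) y = {i | y ∈ T i}.encard := by
  rw [← tsum_set_one, tsum_subtype {i | y ∈ T i} fun _ => (1 : ℕ∞)]
  congr 1 with i

end ENat

namespace Set

variable {ι X : Type*} {Q : ι → Set X} {S : Set X}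

theorem encard_le_of_forall_finite_subset {c : ℕ∞}
    (h : ∀ t ⊆ S, t.Finite → t.encard ≤ c) : S.encard ≤ c := by
  refine ENat.forall_natCast_le_iff_le.mp fun n hn => ?_
  obtain ⟨t, hts, ht⟩ := exists_subset_encard_eq hn
  exact ht ▸ h t hts (finite_of_encard_eq_coe ht)

theorem encard_setOf_inter_nonempty_le (hQ : Pairwise (Function.onFun Disjoint Q)) :
    {i | (Q i ∩ S).Nonempty}.encard ≤ S.encard := by
  let pick : {i | (Q i ∩ S).Nonempty} → S := fun i => ⟨i.2.some, i.2.some_mem.2⟩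
  refine ENat.card_le_card_of_injective (f := pick) fun i j hij => Subtype.ext ?_
  have hsame : i.2.some = j.2.some := congrArg Subtype.val hij
  by_contra hne
  exact disjoint_left.mp (hQ hne) i.2.some_mem.1 (hsame ▸ j.2.some_mem.1)

theorem encard_le_encard_setOf_inter_nonempty (hcover : S ⊆ ⋃ i, Q i)
    (hsub : ∀ i, (Q i ∩ S).Subsingleton) : S.encard ≤ {i | (Q i ∩ S).Nonempty}.encard := by
  have hpiece : ∀ x : S, ∃ i, x.1 ∈ Q i := fun x => mem_iUnion.mp (hcover x.2)
  choose piece hpiece using hpiece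
  let index : S → {i | (Q i ∩ S).Nonempty} := fun x => ⟨piece x, x, hpiece x, x.2⟩
  refine ENat.card_le_card_of_injective (f := index) fun x x' hxx' => Subtype.ext ?_
  have hsame : piece x = piece x' := congrArg Subtype.val hxx'
  exact hsub (piece x) ⟨hpiece x, x.2⟩ ⟨hsame ▸ hpiece x', x'.2⟩

theorem Finite.eventually_subsingleton_inter_of_ediam_le {X κ : Type*} [EMetricSpace X]
    {t : Set X} (ht : t.Finite) {l : Filter κ} {ε : κ → ℝ≥0∞} (hε : Tendsto ε l (𝓝 0)) :
    ∀ᶠ k in l, ∀ s : Set X, Metric.ediam s ≤ ε k → (s ∩ t).Subsingleton := by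
  have hsep : ∀ᶠ k in l, ∀ p ∈ t ×ˢ t, p.1 ≠ p.2 → ε k < edist p.1 p.2 := by
    refine (ht.prod ht).eventually_all.mpr fun p _ => ?_
    by_cases hp : p.1 = p.2
    · exact Eventually.of_forall fun _ h => absurd hp h
    · exact (hε.eventually (gt_mem_nhds (edist_pos.mpr hp))).mono fun _ h _ => h
  filter_upwards [hsep] with k hk s hs x hx x' hx'
  by_contra hne
  exact (hk (x, x') ⟨hx.2, hx'.2⟩ hne).not_ge
    ((Metric.edist_le_ediam_of_mem hx.1 hx'.1).trans hs)

end Set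

theorem banachIndicatrix_eq_iSup_tsum_indicator_general
    {X Y : Type*} [MetricSpace X] {I : ℕ → Type*}
    (f : X → Y) (A : Set X)
    (Q : (k : ℕ) → I k → Set X)
    (hdisj : ∀ k, Pairwise (Function.onFun Disjoint (Q k)))
    (hcover : ∀ k, ⋃ α, Q k α = Set.univ)
    (ε : ℕ → ENNReal)
    (hdiam : ∀ k α, EMetric.diam (Q k α) ≤ ε k)
    (hε : Filter.Tendsto ε Filter.atTop (nhds 0))
    (y : Y) :
    banachIndicatrix f A y =
      ⨆ k : ℕ, ∑' α : I k, (f '' (Q k α ∩ A)).indicator (fun _ => (1 : ℕ∞)) y := by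
  set S := A ∩ f ⁻¹' {y}
  have hcount : ∀ k, ∑' α : I k, (f '' (Q k α ∩ A)).indicator (fun _ => (1 : ℕ∞)) y =
      {α | (Q k α ∩ S).Nonempty}.encard := fun k => by
    simp_rw [ENat.tsum_indicator_one, ← inter_singleton_nonempty, image_inter_nonempty_iff,
      inter_assoc]
    rfl
  simp_rw [banachIndicatrix, hcount]
  refine le_antisymm (encard_le_of_forall_finite_subset fun t hts ht => ?_)
    (iSup_le fun k => encard_setOf_inter_nonempty_le (hdisj k))
  obtain ⟨k, hk⟩ := (ht.eventually_subsingleton_inter_of_ediam_le hε).exists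
  calc t.encard ≤ {α | (Q k α ∩ t).Nonempty}.encard :=
        encard_le_encard_setOf_inter_nonempty (by simp [hcover k]) fun α => hk _ (hdiam k α)
    _ ≤ {α | (Q k α ∩ S).Nonempty}.encard :=
        encard_le_encard fun α hα => hα.mono (inter_subset_inter_right _ hts)
    _ ≤ ⨆ k, {α | (Q k α ∩ S).Nonempty}.encard := le_iSup_of_le k le_rfl

/-- If for each `k` the space `X` is partitioned into countably many
pairwise disjoint pieces `Q k α` of diameter at most `ε k`, with `ε k → 0`, then the
Banach indicatrix `N(y, f, A)` equals the supremum over `k` of the number of pieces on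
which `f` attains the value `y` within `A`. -/
theorem banachIndicatrix_eq_iSup_tsum_indicator
    {X Y : Type*} [MetricSpace X] {I : ℕ → Type*} [∀ k, Countable (I k)]
    (f : X → Y) (A : Set X)
    (Q : (k : ℕ) → I k → Set X)
    (hdisj : ∀ k, Pairwise (Function.onFun Disjoint (Q k)))
    (hcover : ∀ k, ⋃ α, Q k α = Set.univ)
    (ε : ℕ → ENNReal)
    (hdiam : ∀ k α, EMetric.diam (Q k α) ≤ ε k)
    (hε : Filter.Tendsto ε Filter.atTop (nhds 0))
    (y : Y) :
    banachIndicatrix f A y =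
      ⨆ k : ℕ, ∑' α : I k, (f '' (Q k α ∩ A)).indicator (fun _ => (1 : ℕ∞)) y :=
  banachIndicatrix_eq_iSup_tsum_indicator_general f A Q hdisj hcover ε hdiam hε y
end
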